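/- Let a_{l,m} = (2l+4m)!/((l+m)!·l!·(m!)³), and let γ_{N+1} = 64·(4 + 1/(N+1)). If complex λ, μ satisfy γ_{N+1}·(|λ|+|μ|) < 1, then |Σ_{l+m≥N+1} l·a_{l,m}·λ^(l−1)·μ^m| ≤ ((4(N+1))!/(N!·((N+1)!)³))·(|λ|+|μ|)^N/(1 − γ_{N+1}(|λ|+|μ|)), and the same bound holds for |Σ_{l+m≥N+1} m·a_{l,m}·λ^l·μ^(m−1)|. -/

import Mathlib

noncomputable def aCoeff (l m : ℕ) : ℝ :=
  ((2 * l + 4 * m).factorial : ℝ) /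
    (((l + m).factorial : ℝ) * (l.factorial : ℝ) * ((m.factorial : ℝ)) ^ 3)

/-!
After the shift `l = i + 1` (resp. `m = j + 1`), both series have the form
`∑ [N ≤ i + j] c i j λ^i μ^j`. For fixed `n = i + j` the quantity `(2i + 4j)! / (j!)²` grows
with `j`, which gives `a_{i,j} ≤ a_{0,n} · C(n, i)`; with
`(k + 1) C(n + 1, k + 1) = (n + 1) C(n, k)` this bounds the weight by `D n · C(n, i)`, where
`D n = (n + 1) a_{0,n+1} = (4(n+1))! / (n! ((n+1)!)³)` is the constant of the bound at `n = N`.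
The binomial theorem bounds each diagonal `i + j = n` by `D n (|λ| + |μ|)^n`, and
`D (n + 1) ≤ 256 D n` turns the tail into a geometric series of ratio
`256 (|λ| + |μ|) ≤ γ_{N+1} (|λ| + |μ|)`.
-/

open Finset Nat

theorem summable_and_norm_tsum_le_of_sum_antidiagonal_le {A E : Type*} [AddMonoid A]
    [HasAntidiagonal A] [NormedAddCommGroup E] [CompleteSpace E] {f : A × A → E} {b : A → ℝ}
    (hf : ∀ n, ∑ p ∈ antidiagonal n, ‖f p‖ ≤ b n) (hb : Summable b) :
    Summable f ∧ ‖∑' p, f p‖ ≤ ∑' n, b n := by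
  let e := HasAntidiagonal.sigmaAntidiagonalEquivProd (A := A)
  have hfiber (n : A) : HasSum (fun p : antidiagonal n => ‖f p‖) (∑ p ∈ antidiagonal n, ‖f p‖) :=
    (antidiagonal n).hasSum (fun p => ‖f p‖)
  have hle (n : A) : ∑' p : antidiagonal n, ‖f p‖ ≤ b n := (hfiber n).tsum_eq ▸ hf n
  have hdiag : Summable fun n => ∑' p : antidiagonal n, ‖f p‖ :=
    hb.of_nonneg_of_le (fun n => tsum_nonneg fun _ => norm_nonneg _) hle
  have hsigma : Summable fun x => ‖f (e x)‖ :=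
    (summable_sigma_of_nonneg fun _ => norm_nonneg _).2 ⟨fun n => (hfiber n).summable, hdiag⟩
  have hnorm : Summable fun p => ‖f p‖ := e.summable_iff.1 hsigma
  refine ⟨hnorm.of_norm, (norm_tsum_le_tsum_norm hnorm).trans ?_⟩
  rw [← e.tsum_eq, hsigma.tsum_sigma' fun n => (hfiber n).summable]
  exact hdiag.tsum_le_tsum hle hb

theorem hasSum_ite_le_mul_pow_sub (N : ℕ) (C : ℝ) {q : ℝ} (h0 : 0 ≤ q) (h1 : q < 1) :
    HasSum (fun n => if N ≤ n then C * q ^ (n - N) else 0) (C / (1 - q)) := by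
  refine (hasSum_nat_add_iff' N).1 ?_
  have hhead : ∑ i ∈ range N, (if N ≤ i then C * q ^ (i - N) else 0) = 0 :=
    sum_eq_zero fun i hi => if_neg (by simpa using hi)
  simpa [hhead, div_eq_mul_inv] using (hasSum_geometric_of_lt_one h0 h1).mul_left C

theorem sum_antidiagonal_norm_mul_pow_le {R : Type*} [NormedDivisionRing R] {c : ℕ × ℕ → R}
    {D : ℕ → ℝ} (hc : ∀ p, ‖c p‖ ≤ D (p.1 + p.2) * (p.1 + p.2).choose p.1) (x y : R) (n : ℕ) :
    ∑ p ∈ antidiagonal n, ‖c p * x ^ p.1 * y ^ p.2‖ ≤ D n * (‖x‖ + ‖y‖) ^ n := by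
  rw [(Commute.all ‖x‖ ‖y‖).add_pow', mul_sum]
  refine sum_le_sum fun p hp => ?_
  rw [HasAntidiagonal.mem_antidiagonal] at hp
  rw [norm_mul, norm_mul, norm_pow, norm_pow, nsmul_eq_mul, ← mul_assoc, ← hp, mul_assoc]
  gcongr
  exact hc p

theorem summable_and_norm_tsum_tail_le_of_ratio {R : Type*} [NormedDivisionRing R]
    [CompleteSpace R] {c : ℕ × ℕ → R} {D : ℕ → ℝ} {ρ : ℝ}
    (hc : ∀ p, ‖c p‖ ≤ D (p.1 + p.2) * (p.1 + p.2).choose p.1) (hρ : 0 ≤ ρ)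
    (hD : ∀ n, D (n + 1) ≤ ρ * D n) (x y : R) (N : ℕ) (h : ρ * (‖x‖ + ‖y‖) < 1) :
    Summable (fun p : ℕ × ℕ => if N ≤ p.1 + p.2 then c p * x ^ p.1 * y ^ p.2 else 0) ∧
    ‖∑' p : ℕ × ℕ, if N ≤ p.1 + p.2 then c p * x ^ p.1 * y ^ p.2 else 0‖ ≤
      D N * (‖x‖ + ‖y‖) ^ N / (1 - ρ * (‖x‖ + ‖y‖)) := by
  set r := ‖x‖ + ‖y‖
  have hgeom := hasSum_ite_le_mul_pow_sub N (D N * r ^ N) (by positivity) h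
  rw [← hgeom.tsum_eq]
  refine summable_and_norm_tsum_le_of_sum_antidiagonal_le (fun n => ?_) hgeom.summable
  split_ifs with hn
  · obtain ⟨k, rfl⟩ := exists_add_of_le hn
    have hDk : D (N + k) ≤ ρ ^ k * D N := le_geom (u := fun k => D (N + k)) hρ k fun i _ => hD _
    calc ∑ p ∈ antidiagonal (N + k), ‖if N ≤ p.1 + p.2 then c p * x ^ p.1 * y ^ p.2 else 0‖
        = ∑ p ∈ antidiagonal (N + k), ‖c p * x ^ p.1 * y ^ p.2‖ :=
          sum_congr rfl fun p hp => by
            rw [if_pos ((HasAntidiagonal.mem_antidiagonal.1 hp).symm ▸ hn)]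
      _ ≤ D (N + k) * r ^ (N + k) := sum_antidiagonal_norm_mul_pow_le hc x y _
      _ ≤ ρ ^ k * D N * r ^ (N + k) := by gcongr
      _ = D N * r ^ N * (ρ * r) ^ (N + k - N) := by
          rw [Nat.add_sub_cancel_left, mul_pow, pow_add]; ring
  · exact (sum_eq_zero fun p hp => by
      rw [if_neg ((HasAntidiagonal.mem_antidiagonal.1 hp).symm ▸ hn), norm_zero]).le

theorem summable_and_norm_tsum_le_of_comp {β γ E : Type*} [NormedAddCommGroup E] {f : β → E}
    {g : γ → β} (hg : Function.Injective g) (hf : ∀ x ∉ Set.range g, f x = 0) {B : ℝ}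
    (h : Summable (f ∘ g) ∧ ‖∑' c, (f ∘ g) c‖ ≤ B) : Summable f ∧ ‖∑' b, f b‖ ≤ B :=
  ⟨(hg.summable_iff hf).1 h.1, hg.tsum_eq (Function.support_subset_iff'.2 hf) ▸ h.2⟩

theorem factorial_mul_factorial_sq_le_succ (l m : ℕ) :
    (2 * (l + 1) + 4 * m)! * (m + 1)! ^ 2 ≤ (2 * l + 4 * (m + 1))! * m ! ^ 2 := by
  have h2 : 2 * l + 4 * (m + 1) = 2 * (l + 1) + 4 * m + 1 + 1 := by ring
  have hsq : (m + 1) ^ 2 ≤ (2 * (l + 1) + 4 * m + 1 + 1) * (2 * (l + 1) + 4 * m + 1) := by nlinarith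
  rw [h2, factorial_succ (2 * (l + 1) + 4 * m + 1), factorial_succ (2 * (l + 1) + 4 * m),
    factorial_succ m]
  calc (2 * (l + 1) + 4 * m)! * ((m + 1) * m !) ^ 2
      = (m + 1) ^ 2 * ((2 * (l + 1) + 4 * m)! * m ! ^ 2) := by ring
    _ ≤ (2 * (l + 1) + 4 * m + 1 + 1) * (2 * (l + 1) + 4 * m + 1) *
          ((2 * (l + 1) + 4 * m)! * m ! ^ 2) := by gcongr
    _ = _ := by ring

theorem factorial_mul_factorial_sq_le (l m : ℕ) :
    (2 * l + 4 * m)! * (l + m)! ^ 2 ≤ (4 * (l + m))! * m ! ^ 2 := by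
  induction l generalizing m with
  | zero => simp
  | succ l ih =>
    rw [add_right_comm l 1 m, add_assoc l m 1]
    refine Nat.le_of_mul_le_mul_right ?_ (pow_pos (factorial_pos (m + 1)) 2)
    calc (2 * (l + 1) + 4 * m)! * (l + (m + 1))! ^ 2 * (m + 1)! ^ 2
        = (2 * (l + 1) + 4 * m)! * (m + 1)! ^ 2 * (l + (m + 1))! ^ 2 := by ring
      _ ≤ (2 * l + 4 * (m + 1))! * m ! ^ 2 * (l + (m + 1))! ^ 2 :=
          Nat.mul_le_mul_right _ (factorial_mul_factorial_sq_le_succ l m)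
      _ = (2 * l + 4 * (m + 1))! * (l + (m + 1))! ^ 2 * m ! ^ 2 := by ring
      _ ≤ (4 * (l + (m + 1)))! * (m + 1)! ^ 2 * m ! ^ 2 := Nat.mul_le_mul_right _ (ih (m + 1))
      _ = (4 * (l + (m + 1)))! * m ! ^ 2 * (m + 1)! ^ 2 := by ring

theorem aCoeff_nonneg (l m : ℕ) : 0 ≤ aCoeff l m := by
  unfold aCoeff; positivity

theorem aCoeff_le_aCoeff_zero_mul_choose (l m : ℕ) :
    aCoeff l m ≤ aCoeff 0 (l + m) * (l + m).choose l := by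
  have key := (Nat.cast_le (α := ℝ)).2 (factorial_mul_factorial_sq_le l m)
  push_cast at key
  rw [cast_add_choose]
  unfold aCoeff
  simp only [mul_zero, zero_add, factorial_zero, cast_one, mul_one]
  field_simp
  linarith

noncomputable def tailCoeff (n : ℕ) : ℝ :=
  ((4 * (n + 1)).factorial : ℝ) / ((n.factorial : ℝ) * ((n + 1).factorial : ℝ) ^ 3)

theorem tailCoeff_nonneg (n : ℕ) : 0 ≤ tailCoeff n := by
  unfold tailCoeff; positivity

theorem tailCoeff_eq (n : ℕ) : tailCoeff n = (n + 1) * aCoeff 0 (n + 1) := by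
  simp only [tailCoeff, aCoeff, mul_zero, zero_add, factorial_zero, cast_one, mul_one]
  rw [factorial_succ n]
  push_cast
  field_simp

theorem tailCoeff_succ_le (n : ℕ) : tailCoeff (n + 1) ≤ 256 * tailCoeff n := by
  have hrec : tailCoeff (n + 1) =
      (4 * n + 8) * (4 * n + 7) * (4 * n + 6) * (4 * n + 5) / ((n + 1) * (n + 2) ^ 3) *
        tailCoeff n := by
    unfold tailCoeff
    rw [show 4 * (n + 1 + 1) = 4 * (n + 1) + 1 + 1 + 1 + 1 by ring, factorial_succ (n + 1),
      factorial_succ n]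
    simp only [factorial_succ (4 * (n + 1) + 1 + 1 + 1), factorial_succ (4 * (n + 1) + 1 + 1),
      factorial_succ (4 * (n + 1) + 1), factorial_succ (4 * (n + 1))]
    push_cast
    field_simp
    ring
  have hratio : (4 * n + 8) * (4 * n + 7) * (4 * n + 6) * (4 * n + 5) / ((n + 1) * (n + 2) ^ 3)
      ≤ (256 : ℝ) := by
    rw [div_le_iff₀ (by positivity)]
    have hn : (0 : ℝ) ≤ n := n.cast_nonneg
    nlinarith [pow_nonneg hn 2, pow_nonneg hn 3, pow_nonneg hn 4]
  rw [hrec]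
  exact mul_le_mul_of_nonneg_right hratio (tailCoeff_nonneg n)

theorem succ_mul_aCoeff_succ_left_le (l m : ℕ) :
    (l + 1) * aCoeff (l + 1) m ≤ tailCoeff (l + m) * (l + m).choose l := by
  have hchoose : ((l + m + 1 : ℕ) : ℝ) * (l + m).choose l =
      (l + m + 1).choose (l + 1) * (l + 1) := by
    exact_mod_cast add_one_mul_choose_eq (l + m) l
  push_cast at hchoose
  calc (l + 1) * aCoeff (l + 1) m
        ≤ (l + 1) * (aCoeff 0 (l + m + 1) * (l + m + 1).choose (l + 1)) := by
        gcongr; simpa [add_right_comm] using aCoeff_le_aCoeff_zero_mul_choose (l + 1) m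
    _ = tailCoeff (l + m) * (l + m).choose l := by
        rw [tailCoeff_eq]; push_cast; linear_combination (-aCoeff 0 (l + m + 1)) * hchoose

theorem succ_mul_aCoeff_succ_right_le (l m : ℕ) :
    (m + 1) * aCoeff l (m + 1) ≤ tailCoeff (l + m) * (l + m).choose l := by
  have hchoose : ((l + m).choose l : ℝ) * (l + m + 1 : ℕ) =
      (l + m + 1).choose l * (m + 1 : ℕ) := by
    have := choose_mul_succ_eq (l + m) l
    rw [show l + m + 1 - l = m + 1 by omega] at this
    exact_mod_cast this
  push_cast at hchoose
  calc (m + 1) * aCoeff l (m + 1)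
        ≤ (m + 1) * (aCoeff 0 (l + m + 1) * (l + m + 1).choose l) := by
        gcongr; simpa [add_assoc] using aCoeff_le_aCoeff_zero_mul_choose l (m + 1)
    _ = tailCoeff (l + m) * (l + m).choose l := by
        rw [tailCoeff_eq]; push_cast; linear_combination (-aCoeff 0 (l + m + 1)) * hchoose

theorem aCoeff_tail_left_summable_and_norm_tsum_le (N : ℕ) (lam mu : ℂ)
    (h : 256 * (‖lam‖ + ‖mu‖) < 1) :
    Summable (fun p : ℕ × ℕ =>
      if N + 1 ≤ p.1 + p.2 then (p.1 : ℂ) * (aCoeff p.1 p.2 : ℂ) * lam ^ (p.1 - 1) * mu ^ p.2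
      else 0) ∧
    ‖(∑' p : ℕ × ℕ,
        if N + 1 ≤ p.1 + p.2 then (p.1 : ℂ) * (aCoeff p.1 p.2 : ℂ) * lam ^ (p.1 - 1) * mu ^ p.2
        else 0)‖ ≤
      tailCoeff N * (‖lam‖ + ‖mu‖) ^ N / (1 - 256 * (‖lam‖ + ‖mu‖)) := by
  refine summable_and_norm_tsum_le_of_comp (g := Prod.map succ id)
    (succ_injective.prodMap Function.injective_id) ?_ ?_
  · rintro ⟨_ | l, m⟩ hp
    · simp
    · exact absurd ⟨(l, m), rfl⟩ hp
  · have hc (p : ℕ × ℕ) : ‖((p.1 + 1 : ℕ) : ℂ) * (aCoeff (p.1 + 1) p.2 : ℂ)‖ ≤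
        tailCoeff (p.1 + p.2) * (p.1 + p.2).choose p.1 := by
      rw [norm_mul, Complex.norm_natCast, Complex.norm_real,
        Real.norm_of_nonneg (aCoeff_nonneg _ _)]
      push_cast
      exact succ_mul_aCoeff_succ_left_le _ _
    simp only [Function.comp_def, Prod.map_fst, Prod.map_snd, id_eq, succ_eq_add_one,
      add_tsub_cancel_right, add_right_comm _ 1, add_le_add_iff_right]
    exact summable_and_norm_tsum_tail_le_of_ratio hc (by norm_num) tailCoeff_succ_le lam mu N h

theorem aCoeff_tail_right_summable_and_norm_tsum_le (N : ℕ) (lam mu : ℂ)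
    (h : 256 * (‖lam‖ + ‖mu‖) < 1) :
    Summable (fun p : ℕ × ℕ =>
      if N + 1 ≤ p.1 + p.2 then (p.2 : ℂ) * (aCoeff p.1 p.2 : ℂ) * lam ^ p.1 * mu ^ (p.2 - 1)
      else 0) ∧
    ‖(∑' p : ℕ × ℕ,
        if N + 1 ≤ p.1 + p.2 then (p.2 : ℂ) * (aCoeff p.1 p.2 : ℂ) * lam ^ p.1 * mu ^ (p.2 - 1)
        else 0)‖ ≤
      tailCoeff N * (‖lam‖ + ‖mu‖) ^ N / (1 - 256 * (‖lam‖ + ‖mu‖)) := by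
  refine summable_and_norm_tsum_le_of_comp (g := Prod.map id succ)
    (Function.injective_id.prodMap succ_injective) ?_ ?_
  · rintro ⟨l, _ | m⟩ hp
    · simp
    · exact absurd ⟨(l, m), rfl⟩ hp
  · have hc (p : ℕ × ℕ) : ‖((p.2 + 1 : ℕ) : ℂ) * (aCoeff p.1 (p.2 + 1) : ℂ)‖ ≤
        tailCoeff (p.1 + p.2) * (p.1 + p.2).choose p.1 := by
      rw [norm_mul, Complex.norm_natCast, Complex.norm_real,
        Real.norm_of_nonneg (aCoeff_nonneg _ _)]
      push_cast
      exact succ_mul_aCoeff_succ_right_le _ _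
    simp only [Function.comp_def, Prod.map_fst, Prod.map_snd, id_eq, succ_eq_add_one,
      add_tsub_cancel_right, ← add_assoc, add_le_add_iff_right]
    exact summable_and_norm_tsum_tail_le_of_ratio hc (by norm_num) tailCoeff_succ_le lam mu N h

theorem tail_bound_delta6 (N : ℕ) (lam mu : ℂ)
    (h : 64 * (4 + 1 / ((N : ℝ) + 1)) * (‖lam‖ + ‖mu‖) < 1) :
    Summable (fun p : ℕ × ℕ =>
      if N + 1 ≤ p.1 + p.2 then (p.1 : ℂ) * (aCoeff p.1 p.2 : ℂ) * lam ^ (p.1 - 1) * mu ^ p.2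
      else 0) ∧
    ‖(∑' p : ℕ × ℕ,
        if N + 1 ≤ p.1 + p.2 then (p.1 : ℂ) * (aCoeff p.1 p.2 : ℂ) * lam ^ (p.1 - 1) * mu ^ p.2
        else 0)‖ ≤
      ((4 * (N + 1)).factorial : ℝ) / ((N.factorial : ℝ) * ((N + 1).factorial : ℝ) ^ 3) *
        (‖lam‖ + ‖mu‖) ^ N /
        (1 - 64 * (4 + 1 / ((N : ℝ) + 1)) * (‖lam‖ + ‖mu‖)) ∧
    Summable (fun p : ℕ × ℕ =>
      if N + 1 ≤ p.1 + p.2 then (p.2 : ℂ) * (aCoeff p.1 p.2 : ℂ) * lam ^ p.1 * mu ^ (p.2 - 1)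
      else 0) ∧
    ‖(∑' p : ℕ × ℕ,
        if N + 1 ≤ p.1 + p.2 then (p.2 : ℂ) * (aCoeff p.1 p.2 : ℂ) * lam ^ p.1 * mu ^ (p.2 - 1)
        else 0)‖ ≤
      ((4 * (N + 1)).factorial : ℝ) / ((N.factorial : ℝ) * ((N + 1).factorial : ℝ) ^ 3) *
        (‖lam‖ + ‖mu‖) ^ N /
        (1 - 64 * (4 + 1 / ((N : ℝ) + 1)) * (‖lam‖ + ‖mu‖)) := by
  have hr : 0 ≤ ‖lam‖ + ‖mu‖ := by positivity
  have hγ : 256 ≤ 64 * (4 + 1 / ((N : ℝ) + 1)) := by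
    have : 0 ≤ 1 / ((N : ℝ) + 1) := by positivity
    linarith
  have hγr := mul_le_mul_of_nonneg_right hγ hr
  have h256 : 256 * (‖lam‖ + ‖mu‖) < 1 := hγr.trans_lt h
  have hweaken : tailCoeff N * (‖lam‖ + ‖mu‖) ^ N / (1 - 256 * (‖lam‖ + ‖mu‖)) ≤
      tailCoeff N * (‖lam‖ + ‖mu‖) ^ N / (1 - 64 * (4 + 1 / ((N : ℝ) + 1)) * (‖lam‖ + ‖mu‖)) :=
    div_le_div_of_nonneg_left (mul_nonneg (tailCoeff_nonneg N) (by positivity)) (sub_pos.2 h)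
      (sub_le_sub_left hγr 1)
  obtain ⟨hs₁, hb₁⟩ := aCoeff_tail_left_summable_and_norm_tsum_le N lam mu h256
  obtain ⟨hs₂, hb₂⟩ := aCoeff_tail_right_summable_and_norm_tsum_le N lam mu h256
  exact ⟨hs₁, hb₁.trans hweaken, hs₂, hb₂.trans hweaken⟩
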